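/- Define x_n^{(d)} = A_{2n}^{(d)} / binomial(2n, n). Then for all d ≥ 1 and n ≥ 0, x_n^{(d+1)} = sum_{k=0}^{n} binomial(n,k)^2 * x_k^{(d)}. -/

import Mathlib

/-- The step of the walk on `ℤ^d` determined by a coordinate and a sign. -/
def stepVec (d : ℕ) (s : Fin d × Bool) : Fin d → ℤ :=
  fun t => if t = s.1 then (if s.2 then 1 else -1) else 0

/-- `closedCount d n` is the number `A_{2n}^{(d)}` of walks of length `2n` on `ℤ^d`
starting and ending at the origin. -/
noncomputable def closedCount (d n : ℕ) : ℕ :=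
  Nat.card {f : Fin (2 * n) → Fin d × Bool // ∑ i, stepVec d (f i) = 0}

/-- `x_n^{(d)} = A_{2n}^{(d)} / C(2n, n)`, as a rational number. -/
noncomputable def xSeq (d n : ℕ) : ℚ :=
  (closedCount d n : ℚ) / ((2 * n).choose n : ℚ)

/-!
A closed walk of length `2n` in `ℤ^(d+1)` splits into three pieces of data: the set `s` of
times at which it moves in one of the first `d` coordinates, a closed walk in `ℤ^d` indexed by
`s`, and a balanced `±1` sequence on the complement of `s` recording the moves in the last
coordinate. The balanced sequence forces `|s| = 2k` to be even, whence
`A_{2n}^{(d+1)} = ∑ₖ C(2n, 2k) A_{2k}^{(d)} C(2n - 2k, n - k)`, and the identity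
`C(2n, 2k) C(2k, k) C(2n - 2k, n - k) = C(2n, n) C(n, k)²` turns this into the recursion.
-/

open Finset
open scoped Nat

def signStep (b : Bool) : ℤ := if b then 1 else -1

abbrev ClosedWalk (d : ℕ) (α : Type*) [Fintype α] :=
  {f : α → Fin d × Bool // ∑ i, stepVec d (f i) = 0}

abbrev BalancedSigns (α : Type*) [Fintype α] :=
  {g : α → Bool // ∑ i, signStep (g i) = 0}

section Reindex

variable {α β : Type*} [Fintype α] [Fintype β]

lemma natCard_closedWalk_congr (d : ℕ) (e : α ≃ β) :
    Nat.card (ClosedWalk d α) = Nat.card (ClosedWalk d β) :=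
  Nat.card_congr <| (e.arrowCongr (.refl _)).subtypeEquiv fun f => by
    simp [Equiv.arrowCongr, ← e.sum_comp]

lemma natCard_balancedSigns_congr (e : α ≃ β) :
    Nat.card (BalancedSigns α) = Nat.card (BalancedSigns β) :=
  Nat.card_congr <| (e.arrowCongr (.refl _)).subtypeEquiv fun f => by
    simp [Equiv.arrowCongr, ← e.sum_comp]

end Reindex

section Signs

variable {α : Type*} [Fintype α]

lemma sum_signStep (g : α → Bool) :
    ∑ i, signStep (g i) = 2 * #{i | g i} - Fintype.card α := by
  have h : ∀ i, signStep (g i) = 2 * (if g i then 1 else 0) - 1 := by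
    intro i; cases g i <;> rfl
  simp only [h, sum_sub_distrib, ← mul_sum, sum_boole, sum_const, card_univ]
  simp

def balancedSignsEquiv [DecidableEq α] :
    BalancedSigns α ≃ {s : Finset α // 2 * #s = Fintype.card α} where
  toFun g := ⟨({i | g.1 i} : Finset α), by have := g.2; rw [sum_signStep] at this; omega⟩
  invFun s := ⟨fun i => i ∈ s.1, by simp [sum_signStep, ← s.2]⟩
  left_inv g := by ext i; simp
  right_inv s := by ext i; simp

lemma natCard_balancedSigns_of_card_eq {j : ℕ} (h : Fintype.card α = 2 * j) :
    Nat.card (BalancedSigns α) = (2 * j).choose j := by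
  classical
  have hcard (s : Finset α) : 2 * #s = Fintype.card α ↔ #s = j := by omega
  rw [Nat.card_congr (balancedSignsEquiv.trans (.subtypeEquivRight hcard)),
    Nat.card_eq_fintype_card, Fintype.card_finset_len, h]

lemma natCard_balancedSigns_of_odd (h : Odd (Fintype.card α)) :
    Nat.card (BalancedSigns α) = 0 := by
  classical
  have : IsEmpty (BalancedSigns α) :=
    balancedSignsEquiv.isEmpty_congr.2
      ⟨fun s => Nat.not_even_iff_odd.2 h (s.2 ▸ even_two_mul _)⟩
  exact Nat.card_of_isEmpty

end Signs

section Glue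

variable {α : Type*} [Fintype α] [DecidableEq α] {d : ℕ} (s : Finset α)

def glue (h : s → Fin d × Bool) (g : ↥sᶜ → Bool) : α → Fin (d + 1) × Bool := fun i =>
  if hi : i ∈ s then ((h ⟨i, hi⟩).1.castSucc, (h ⟨i, hi⟩).2)
  else (Fin.last d, g ⟨i, mem_compl.2 hi⟩)

variable {s}

lemma glue_of_mem (h : s → Fin d × Bool) (g : ↥sᶜ → Bool) (i : s) :
    glue s h g i = ((h i).1.castSucc, (h i).2) :=
  dif_pos i.2

lemma glue_of_mem_compl (h : s → Fin d × Bool) (g : ↥sᶜ → Bool) (i : ↥sᶜ) :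
    glue s h g i = (Fin.last d, g i) :=
  dif_neg (mem_compl.1 i.2)

lemma stepVec_castSucc (j : Fin d) (b : Bool) :
    stepVec (d + 1) (j.castSucc, b) = Fin.snoc (stepVec d (j, b)) 0 := by
  ext t
  refine Fin.lastCases ?_ (fun u => ?_) t
  · simp [stepVec, (Fin.castSucc_lt_last j).ne']
  · simp [stepVec]

lemma stepVec_last (b : Bool) :
    stepVec (d + 1) (Fin.last d, b) = Fin.snoc 0 (signStep b) := by
  ext t
  refine Fin.lastCases ?_ (fun u => ?_) t
  · simp [stepVec, signStep]
  · simp [stepVec, (Fin.castSucc_lt_last u).ne]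

lemma sum_stepVec_glue (h : s → Fin d × Bool) (g : ↥sᶜ → Bool) :
    ∑ i, stepVec (d + 1) (glue s h g i) =
      Fin.snoc (∑ i, stepVec d (h i)) (∑ i, signStep (g i)) := by
  rw [← sum_add_sum_compl s, ← sum_coe_sort s, ← sum_coe_sort sᶜ]
  simp only [glue_of_mem, glue_of_mem_compl, stepVec_castSucc, stepVec_last]
  ext t
  refine Fin.lastCases ?_ (fun u => ?_) t <;> simp [Finset.sum_apply]

lemma sum_stepVec_glue_eq_zero_iff (h : s → Fin d × Bool) (g : ↥sᶜ → Bool) :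
    ∑ i, stepVec (d + 1) (glue s h g i) = 0 ↔
      ∑ i, stepVec d (h i) = 0 ∧ ∑ i, signStep (g i) = 0 := by
  have snoc_zero_zero : (Fin.snoc 0 0 : Fin (d + 1) → ℤ) = 0 := by
    ext t
    refine Fin.lastCases ?_ (fun u => ?_) t <;> simp
  rw [sum_stepVec_glue, ← snoc_zero_zero, Fin.snoc_inj]

lemma glue_injective : Function.Injective2 (glue (d := d) s) := by
  intro h h' g g' e
  constructor
  · ext i : 1
    simpa [glue_of_mem, Prod.ext_iff] using congrFun e i
  · ext i : 1
    simpa [glue_of_mem_compl] using congrFun e i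

variable (d) in
def lowSteps (f : α → Fin (d + 1) × Bool) : Finset α := {i | (f i).1 ≠ Fin.last d}

lemma lowSteps_glue (h : s → Fin d × Bool) (g : ↥sᶜ → Bool) :
    lowSteps d (glue s h g) = s := by
  ext i
  by_cases hi : i ∈ s
  · simp [lowSteps, glue_of_mem h g ⟨i, hi⟩, hi, (Fin.castSucc_lt_last _).ne]
  · simp [lowSteps, glue_of_mem_compl h g ⟨i, mem_compl.2 hi⟩, hi]

lemma exists_glue_eq (f : α → Fin (d + 1) × Bool) (hf : lowSteps d f = s) :
    ∃ h g, glue s h g = f := by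
  have hlow (i : α) : i ∈ s ↔ (f i).1 ≠ Fin.last d := by simp [← hf, lowSteps]
  refine ⟨fun i => ((f i).1.castPred ((hlow i).1 i.2), (f i).2), fun i => (f i).2, ?_⟩
  ext i : 1
  by_cases hi : i ∈ s
  · simp [glue_of_mem _ _ ⟨i, hi⟩]
  · exact (glue_of_mem_compl _ _ ⟨i, mem_compl.2 hi⟩).trans
      (Prod.ext (not_not.1 ((hlow i).not.1 hi)).symm rfl)

variable (s) in
lemma natCard_closedWalk_lowSteps_eq :
    Nat.card {f : ClosedWalk (d + 1) α // lowSteps d f.1 = s} =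
      Nat.card (ClosedWalk d s) * Nat.card (BalancedSigns ↥sᶜ) := by
  rw [← Nat.card_prod]
  symm
  refine Nat.card_eq_of_bijective (fun p => ⟨⟨glue s p.1.1 p.2.1,
    (sum_stepVec_glue_eq_zero_iff _ _).2 ⟨p.1.2, p.2.2⟩⟩, lowSteps_glue _ _⟩) ⟨?_, ?_⟩
  · rintro ⟨⟨h, _⟩, ⟨g, _⟩⟩ ⟨⟨h', _⟩, ⟨g', _⟩⟩ e
    obtain ⟨rfl, rfl⟩ := glue_injective (congrArg (·.1.1) e)
    rfl
  · rintro ⟨⟨f, hf⟩, hs⟩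
    obtain ⟨h, g, rfl⟩ := exists_glue_eq f hs
    obtain ⟨hh, hg⟩ := (sum_stepVec_glue_eq_zero_iff h g).1 hf
    exact ⟨(⟨h, hh⟩, ⟨g, hg⟩), rfl⟩

end Glue

variable (d) in
lemma natCard_closedWalk_succ (α : Type*) [Fintype α] [DecidableEq α] :
    Nat.card (ClosedWalk (d + 1) α) =
      ∑ s : Finset α, Nat.card (ClosedWalk d s) * Nat.card (BalancedSigns ↥sᶜ) := by
  rw [Nat.card_congr (Equiv.sigmaFiberEquiv fun f : ClosedWalk (d + 1) α => lowSteps d f.1).symm,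
    Nat.card_sigma]
  exact sum_congr rfl fun s _ => natCard_closedWalk_lowSteps_eq s

lemma sum_range_two_mul_add_one_of_odd_eq_zero {M : Type*} [AddCommMonoid M] (f : ℕ → M)
    (hf : ∀ m, Odd m → f m = 0) (n : ℕ) :
    ∑ m ∈ range (2 * n + 1), f m = ∑ k ∈ range (n + 1), f (2 * k) := by
  induction n with
  | zero => simp
  | succ n ih =>
    rw [sum_range_succ _ (n + 1), ← ih, show 2 * (n + 1) + 1 = 2 * n + 1 + 1 + 1 by ring,
      sum_range_succ, sum_range_succ, hf _ (odd_two_mul_add_one n), add_zero]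
    rfl

lemma closedCount_succ (d n : ℕ) :
    closedCount (d + 1) n =
      ∑ k ∈ range (n + 1),
        (2 * n).choose (2 * k) * (closedCount d k * (2 * (n - k)).choose (n - k)) := by
  set f : ℕ → ℕ := fun m =>
    Nat.card (ClosedWalk d (Fin m)) * Nat.card (BalancedSigns (Fin (2 * n - m)))
  have hsize (s : Finset (Fin (2 * n))) :
      Nat.card (ClosedWalk d s) * Nat.card (BalancedSigns ↥sᶜ) = f #s := by
    rw [natCard_closedWalk_congr d (Fintype.equivFinOfCardEq (Fintype.card_coe s)),
      natCard_balancedSigns_congr (Fintype.equivFinOfCardEq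
        (by rw [Fintype.card_coe, card_compl, Fintype.card_fin]))]
  have hodd (m : ℕ) (hm : Odd m) : (2 * n).choose m • f m = 0 := by
    rcases le_or_gt m (2 * n) with hle | hlt
    · obtain ⟨r, rfl⟩ := hm
      dsimp only [f]
      rw [natCard_balancedSigns_of_odd (by rw [Fintype.card_fin]; exact ⟨n - r - 1, by omega⟩),
        mul_zero, smul_zero]
    · rw [Nat.choose_eq_zero_of_lt hlt, zero_smul]
  have heven (k : ℕ) (hk : k ∈ range (n + 1)) :
      (2 * n).choose (2 * k) • f (2 * k) =
        (2 * n).choose (2 * k) * (closedCount d k * (2 * (n - k)).choose (n - k)) := by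
    dsimp only [f]
    rw [smul_eq_mul, natCard_balancedSigns_of_card_eq (j := n - k)]
    · rfl
    · have := mem_range.1 hk
      rw [Fintype.card_fin]
      omega
  calc closedCount (d + 1) n
      = ∑ s ∈ (univ : Finset (Fin (2 * n))).powerset, f #s := by
        rw [powerset_univ, ← sum_congr rfl fun s _ => hsize s]
        exact natCard_closedWalk_succ d _
    _ = ∑ m ∈ range (2 * n + 1), (2 * n).choose m • f m := by
        rw [sum_powerset_apply_card, card_univ, Fintype.card_fin]
    _ = _ := by
        rw [sum_range_two_mul_add_one_of_odd_eq_zero _ hodd]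
        exact sum_congr rfl heven

lemma choose_two_mul_mul_choose_mul_choose (a b : ℕ) :
    (2 * (a + b)).choose (2 * a) * (2 * a).choose a * (2 * b).choose b =
      (2 * (a + b)).choose (a + b) * (a + b).choose a ^ 2 := by
  have h₁ := Nat.choose_mul_factorial_mul_factorial (show 2 * a ≤ 2 * (a + b) by omega)
  have h₂ := Nat.choose_mul_factorial_mul_factorial (show a ≤ 2 * a by omega)
  have h₃ := Nat.choose_mul_factorial_mul_factorial (show b ≤ 2 * b by omega)
  have h₄ := Nat.choose_mul_factorial_mul_factorial (show a + b ≤ 2 * (a + b) by omega)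
  have h₅ := Nat.choose_mul_factorial_mul_factorial (show a ≤ a + b by omega)
  simp only [show 2 * (a + b) - 2 * a = 2 * b by omega, show 2 * a - a = a by omega,
    show 2 * b - b = b by omega, show 2 * (a + b) - (a + b) = a + b by omega,
    Nat.add_sub_cancel_left] at h₁ h₂ h₃ h₄ h₅
  apply Nat.eq_of_mul_eq_mul_right (by positivity : 0 < (a ! * b !) ^ 2)
  calc _ = (2 * (a + b)).choose (2 * a) * ((2 * a).choose a * a ! * a !) *
          ((2 * b).choose b * b ! * b !) := by ring
    _ = (2 * (a + b))! := by rw [h₂, h₃, h₁]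
    _ = _ := by rw [← h₄, ← h₅]; ring

theorem xSeq_succ_general (d n : ℕ) :
    xSeq (d + 1) n = ∑ k ∈ Finset.range (n + 1), (n.choose k : ℚ) ^ 2 * xSeq d k := by
  rw [xSeq, closedCount_succ, Nat.cast_sum, sum_div]
  refine sum_congr rfl fun k hk => ?_
  have hkn : k ≤ n := Nat.lt_succ_iff.1 (mem_range.1 hk)
  have hchoose := choose_two_mul_mul_choose_mul_choose k (n - k)
  rw [Nat.add_sub_cancel' hkn] at hchoose
  have hn : ((2 * n).choose n : ℚ) ≠ 0 := Nat.cast_ne_zero.2 (Nat.choose_pos (by omega)).ne'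
  have hk : ((2 * k).choose k : ℚ) ≠ 0 := Nat.cast_ne_zero.2 (Nat.choose_pos (by omega)).ne'
  have hchooseℚ :
      ((2 * n).choose (2 * k) : ℚ) * (2 * k).choose k * (2 * (n - k)).choose (n - k) =
        (2 * n).choose n * n.choose k ^ 2 := by
    exact_mod_cast hchoose
  rw [xSeq]
  field_simp
  push_cast
  linear_combination (closedCount d k : ℚ) * hchooseℚ

theorem xSeq_succ (d n : ℕ) (hd : 1 ≤ d) :
    xSeq (d + 1) n = ∑ k ∈ Finset.range (n + 1), (n.choose k : ℚ) ^ 2 * xSeq d k :=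
  xSeq_succ_general d n
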